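/- Define the suffix heap of S as the trie in which the node labelled i (in pre-order rank) has path label a prefix of S[SA[i]..n], built by the sequential construction over i = 1..n (shortest absent prefix of S[SA[i]..n]). Then in the suffix heap, the label of every node equals its rank in a pre-order traversal of the heap. -/

import Mathlib

/-- The sequential construction of the suffix heap: at step `i + 1` we insert
the shortest prefix of the lexicographically `(i + 1)`-st suffix
`S[SA(i+1)..n]` that is absent from the current trie. -/
def suffixHeapBuild {α : Type} [DecidableEq α] (S : List α) (SA : ℕ → ℕ) :
    ℕ → Finset (List α)
  | 0 => {([] : List α)}
  | i + 1 =>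
    match ((S.drop (SA (i + 1) - 1)).inits).find?
        (fun p => decide (p ∉ suffixHeapBuild S SA i)) with
    | some p => insert p (suffixHeapBuild S SA i)
    | none => suffixHeapBuild S SA i

/-
The nodes are inserted in increasing lexicographic order: a node inserted at step `k + 1` is a
prefix `p` of the `(k + 1)`-st word that is not a prefix of any earlier node (the heap is
prefix-closed and `p` is new), while every earlier node is a prefix of a lexicographically smaller
word, hence is smaller than `p`. The full `(k + 1)`-st word is never already present, since it
would then be a prefix of a smaller word, so every step inserts exactly one node.
-/

theorem List.eq_of_find?_inits_eq_some_of_isPrefix {α : Type} {l p q : List α}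
    {P : List α → Bool} (h : l.inits.find? P = some p) (hqp : q <+: p) (hq : P q) : q = p := by
  induction l generalizing P p q with
  | nil =>
    obtain rfl : p = [] := by simpa using List.mem_of_find?_eq_some h
    exact List.prefix_nil.mp hqp
  | cons a l ih =>
    rw [List.inits_cons] at h
    by_cases hnil : P []
    · obtain rfl : p = [] := by simpa [List.find?_cons_of_pos hnil] using h.symm
      exact List.prefix_nil.mp hqp
    · rw [List.find?_cons_of_neg hnil, List.find?_map] at h
      obtain ⟨p', hp', rfl⟩ := Option.map_eq_some_iff.mp h
      cases q with
      | nil => exact absurd hq hnil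
      | cons b q' =>
        obtain ⟨rfl, hqp'⟩ := List.cons_prefix_cons.mp hqp
        rw [ih hp' hqp' hq]

theorem List.lt_of_isPrefix_of_lt {α : Type} [LinearOrder α] {a b x y : List α}
    (hax : a <+: x) (hby : b <+: y) (hxy : x < y) (hba : ¬ b <+: a) : a < b := by
  induction a generalizing b x y with
  | nil =>
    cases b with
    | nil => exact absurd List.nil_prefix hba
    | cons _ _ => exact List.Lex.nil
  | cons a₀ a ih =>
    cases b with
    | nil => exact absurd List.nil_prefix hba
    | cons b₀ b =>
      obtain ⟨x', rfl⟩ := hax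
      obtain ⟨y', rfl⟩ := hby
      cases hxy with
      | rel h => exact List.Lex.rel h
      | cons h =>
        exact List.Lex.cons (ih ⟨x', rfl⟩ ⟨y', rfl⟩ h
          fun hp => hba (List.cons_prefix_cons.mpr ⟨rfl, hp⟩))

theorem Finset.sort_insert_of_forall_lt {β : Type} [LinearOrder β] [DecidableEq β]
    {s : Finset β} {a : β} (h : ∀ b ∈ s, b < a) :
    (insert a s).sort (· ≤ ·) = s.sort (· ≤ ·) ++ [a] := by
  have ha : a ∉ s := fun ha => lt_irrefl a (h a ha)
  refine List.Perm.eq_of_pairwise' (Finset.pairwise_sort _ _) ?_ ?_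
  · refine List.pairwise_append.mpr ⟨Finset.pairwise_sort _ _, List.pairwise_singleton _ _, ?_⟩
    intro b hb a' ha'
    rw [List.mem_singleton.mp ha']
    exact (h b ((Finset.mem_sort _).mp hb)).le
  · exact (Finset.sort_perm_toList _ _).trans <| (Finset.toList_insert ha).trans <|
      ((Finset.sort_perm_toList _ _).symm.cons a).trans (List.perm_append_singleton a _).symm

def positionHeap {α : Type} [DecidableEq α] (w : ℕ → List α) : ℕ → Finset (List α)
  | 0 => {[]}
  | k + 1 =>
    match (w (k + 1)).inits.find? (fun p => decide (p ∉ positionHeap w k)) with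
    | some p => insert p (positionHeap w k)
    | none => positionHeap w k

theorem suffixHeapBuild_eq_positionHeap {α : Type} [DecidableEq α] (S : List α)
    (SA : ℕ → ℕ) :
    suffixHeapBuild S SA = positionHeap (fun k => S.drop (SA k - 1)) := by
  funext k
  induction k with
  | zero => rfl
  | succ k ih => simp only [suffixHeapBuild, positionHeap, ih]

namespace positionHeap

section Trie

variable {α : Type} [DecidableEq α] (w : ℕ → List α)

theorem succ_of_find?_eq_some {k : ℕ} {p : List α}
    (h : (w (k + 1)).inits.find? (fun q => decide (q ∉ positionHeap w k)) = some p) :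
    positionHeap w (k + 1) = insert p (positionHeap w k) := by
  rw [positionHeap, h]

theorem mem_succ {k : ℕ} {q : List α} :
    q ∈ positionHeap w (k + 1) ↔ q ∈ positionHeap w k ∨
      (w (k + 1)).inits.find? (fun r => decide (r ∉ positionHeap w k)) = some q := by
  cases h : (w (k + 1)).inits.find? (fun r => decide (r ∉ positionHeap w k)) with
  | none => rw [positionHeap, h]; simp
  | some p => rw [positionHeap, h]; simp [or_comm, eq_comm]

theorem eq_nil_or_isPrefix_of_mem {k : ℕ} {q : List α} (hq : q ∈ positionHeap w k) :
    q = [] ∨ ∃ j ∈ Set.Icc 1 k, q <+: w j := by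
  induction k with
  | zero => simpa [positionHeap] using hq
  | succ k ih =>
    rcases (mem_succ w).mp hq with hq | hnew
    · obtain h | ⟨j, hj, hqj⟩ := ih hq
      · exact .inl h
      · exact .inr ⟨j, ⟨hj.1, hj.2.trans k.le_succ⟩, hqj⟩
    · exact .inr ⟨k + 1, ⟨Nat.le_add_left 1 k, le_rfl⟩,
        (List.mem_inits _ _).mp (List.mem_of_find?_eq_some hnew)⟩

theorem mem_of_isPrefix {k : ℕ} {q r : List α} (hq : q ∈ positionHeap w k) (hrq : r <+: q) :
    r ∈ positionHeap w k := by
  induction k with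
  | zero => simp_all [positionHeap]
  | succ k ih =>
    rcases (mem_succ w).mp hq with hq | hnew
    · exact (mem_succ w).mpr (.inl (ih hq))
    · by_cases hr : r ∈ positionHeap w k
      · exact (mem_succ w).mpr (.inl hr)
      · rw [List.eq_of_find?_inits_eq_some_of_isPrefix hnew hrq (by simpa using hr)]
        exact (mem_succ w).mpr (.inr hnew)

end Trie

section Sorted

variable {α : Type} [LinearOrder α] {w : ℕ → List α} {n : ℕ}

theorem self_notMem (hw : StrictMonoOn w (Set.Icc 1 n)) {k : ℕ} (hk : k < n)
    (hne : w (k + 1) ≠ []) : w (k + 1) ∉ positionHeap w k := by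
  intro hmem
  obtain hnil | ⟨j, ⟨hj1, hjk⟩, hpre⟩ := eq_nil_or_isPrefix_of_mem w hmem
  · exact hne hnil
  · exact hpre.le (hw ⟨hj1, by omega⟩ ⟨by omega, hk⟩ (by omega))

theorem exists_find?_eq_some (hw : StrictMonoOn w (Set.Icc 1 n))
    (hne : ∀ k ∈ Set.Icc 1 n, w k ≠ []) {k : ℕ} (hk : k < n) :
    ∃ p, (w (k + 1)).inits.find? (fun q => decide (q ∉ positionHeap w k)) = some p := by
  refine Option.ne_none_iff_exists'.mp fun hnone => ?_
  have hself :=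
    List.find?_eq_none.mp hnone (w (k + 1)) ((List.mem_inits _ _).mpr List.prefix_rfl)
  simp only [decide_eq_true_eq, not_not] at hself
  exact self_notMem hw hk (hne (k + 1) ⟨by omega, hk⟩) hself

theorem lt_of_find?_eq_some (hw : StrictMonoOn w (Set.Icc 1 n)) {k : ℕ} (hk : k < n)
    {p : List α}
    (h : (w (k + 1)).inits.find? (fun q => decide (q ∉ positionHeap w k)) = some p) :
    ∀ q ∈ positionHeap w k, q < p := by
  intro q hq
  have hp : p ∉ positionHeap w k := by simpa using List.find?_some h
  have hpq : ¬ p <+: q := fun hpq => hp (mem_of_isPrefix w hq hpq)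
  obtain rfl | ⟨j, ⟨hj1, hjk⟩, hqj⟩ := eq_nil_or_isPrefix_of_mem w hq
  · cases p with
    | nil => exact absurd List.nil_prefix hpq
    | cons _ _ => exact List.Lex.nil
  · exact List.lt_of_isPrefix_of_lt hqj ((List.mem_inits _ _).mp (List.mem_of_find?_eq_some h))
      (hw ⟨hj1, by omega⟩ ⟨by omega, hk⟩ (by omega)) hpq

theorem sort_succ (hw : StrictMonoOn w (Set.Icc 1 n)) {k : ℕ} (hk : k < n) {p : List α}
    (h : (w (k + 1)).inits.find? (fun q => decide (q ∉ positionHeap w k)) = some p) :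
    (positionHeap w (k + 1)).sort (· ≤ ·) = (positionHeap w k).sort (· ≤ ·) ++ [p] := by
  rw [succ_of_find?_eq_some w h]
  exact Finset.sort_insert_of_forall_lt (lt_of_find?_eq_some hw hk h)

theorem length_sort (hw : StrictMonoOn w (Set.Icc 1 n))
    (hne : ∀ k ∈ Set.Icc 1 n, w k ≠ []) {k : ℕ} (hk : k ≤ n) :
    ((positionHeap w k).sort (· ≤ ·)).length = k + 1 := by
  induction k with
  | zero => simp [positionHeap]
  | succ k ih =>
    obtain ⟨p, hp⟩ := exists_find?_eq_some hw hne hk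
    rw [sort_succ hw hk hp, List.length_append, ih (by omega), List.length_singleton]

theorem sort_isPrefix_sort (hw : StrictMonoOn w (Set.Icc 1 n))
    (hne : ∀ k ∈ Set.Icc 1 n, w k ≠ []) {k m : ℕ} (hkm : k ≤ m) (hm : m ≤ n) :
    (positionHeap w k).sort (· ≤ ·) <+: (positionHeap w m).sort (· ≤ ·) := by
  induction m, hkm using Nat.le_induction with
  | base => exact List.prefix_rfl
  | succ m _ ih =>
    obtain ⟨p, hp⟩ := exists_find?_eq_some hw hne hm
    rw [sort_succ hw hm hp]
    exact (ih (by omega)).trans (List.prefix_append _ _)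

theorem sort_getElem?_succ (hw : StrictMonoOn w (Set.Icc 1 n))
    (hne : ∀ k ∈ Set.Icc 1 n, w k ≠ []) {i : ℕ} (hi : i < n) {p : List α}
    (h : (w (i + 1)).inits.find? (fun q => decide (q ∉ positionHeap w i)) = some p) :
    ((positionHeap w n).sort (· ≤ ·))[i + 1]? = some p := by
  obtain ⟨rest, hrest⟩ := sort_isPrefix_sort hw hne hi le_rfl
  rw [sort_succ hw hi h] at hrest
  rw [← hrest, List.append_assoc, List.getElem?_append_right (length_sort hw hne hi.le).le]
  simp [length_sort hw hne hi.le]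

end Sorted

end positionHeap

theorem suffixHeap_label_eq_preorder_rank_general
    {α : Type} [LinearOrder α]
    (S : List α)
    (SA : ℕ → ℕ)
    (hSA : Set.BijOn SA (Set.Icc 1 S.length) (Set.Icc 1 S.length))
    (hSAsorted : ∀ i j : ℕ, 1 ≤ i → i < j → j ≤ S.length →
      List.Lex (· < ·) (S.drop (SA i - 1)) (S.drop (SA j - 1))) :
    ∀ i < S.length, ∀ p : List α,
      ((S.drop (SA (i + 1) - 1)).inits).find?
          (fun q => decide (q ∉ suffixHeapBuild S SA i)) = some p →
      ((suffixHeapBuild S SA S.length).sort (· ≤ ·))[i + 1]? = some p := by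
  have hsorted : StrictMonoOn (fun k => S.drop (SA k - 1)) (Set.Icc 1 S.length) :=
    fun i hi j hj hij => hSAsorted i j hi.1 hij hj.2
  have hne : ∀ k ∈ Set.Icc 1 S.length, S.drop (SA k - 1) ≠ [] := fun k hk => by
    obtain ⟨hpos, hle⟩ := hSA.mapsTo hk
    simp only [ne_eq, List.drop_eq_nil_iff, not_le]
    omega
  rw [suffixHeapBuild_eq_positionHeap]
  exact fun i hi p h => positionHeap.sort_getElem?_succ hsorted hne hi h

/-- In the suffix heap of `S` (the trie built sequentially over
`i = 1..n` by inserting the shortest absent prefix of `S[SA(i)..n]`, labelling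
the inserted node `i`), the label of every node equals its rank in a pre-order
traversal of the heap (pre-order = lexicographic order of path labels, with the
root, labelled `0`, at rank `0`). -/
theorem suffixHeap_label_eq_preorder_rank
    {α : Type} [LinearOrder α]
    (S T : List α) (c : α) (hS : S = T ++ [c]) (hc : c ∉ T)
    (SA : ℕ → ℕ)
    (hSA : Set.BijOn SA (Set.Icc 1 S.length) (Set.Icc 1 S.length))
    (hSAsorted : ∀ i j : ℕ, 1 ≤ i → i < j → j ≤ S.length →
      List.Lex (· < ·) (S.drop (SA i - 1)) (S.drop (SA j - 1))) :
    ∀ i < S.length, ∀ p : List α,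
      ((S.drop (SA (i + 1) - 1)).inits).find?
          (fun q => decide (q ∉ suffixHeapBuild S SA i)) = some p →
      ((suffixHeapBuild S SA S.length).sort (· ≤ ·))[i + 1]? = some p :=
  suffixHeap_label_eq_preorder_rank_general S SA hSA hSAsorted
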